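/- Let n ≥ 3 be an integer and α, β, γ real numbers, and consider G_n(α, β, γ, x) = (x² − α)·(xⁿ − β) − γ for x > 0. Then: (a) if αβ ≥ γ > 0 and (α ≤ 0 or β ≤ 0), the equation G_n = 0 has no solution x > 0; (b) if γ > 0 and either αβ < γ, or αβ = γ with α > 0 and β > 0, it has exactly one solution x > 0; (c) if αβ > γ > 0 with α > 0 and β > 0, it has exactly two solutions x > 0; (d) if αβ < γ < 0 and β > 0, it has exactly one solution x > 0. -/

import Mathlib

/-- `GG n α β γ x = (x² − α)(xⁿ − β) − γ`. -/
def GG (n : ℕ) (α β γ x : ℝ) : ℝ := (x ^ 2 - α) * (x ^ n - β) - γ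

namespace GnAux

noncomputable def F (n : ℕ) (α β : ℝ) (x : ℝ) : ℝ := (x ^ 2 - α) * (x ^ n - β)
noncomputable def G2 (n : ℕ) (α β : ℝ) (x : ℝ) : ℝ := (n+2)*x^n - n*α*x^(n-2) - 2*β

lemma F_cont (n : ℕ) (α β : ℝ) : Continuous (F n α β) := by unfold F; fun_prop
lemma G2_cont (n : ℕ) (α β : ℝ) : Continuous (G2 n α β) := by unfold G2; fun_prop

lemma F_zero {n : ℕ} (hn : 3 ≤ n) (α β : ℝ) : F n α β 0 = α * β := by
  simp [F, zero_pow (by omega : n ≠ 0)]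

lemma F_hasDeriv {n : ℕ} (hn : 3 ≤ n) (α β x : ℝ) :
    HasDerivAt (F n α β) (x * G2 n α β x) x := by
  have h := (((hasDerivAt_pow 2 x).sub_const α).mul ((hasDerivAt_pow n x).sub_const β))
  refine h.congr_deriv ?_
  have h1 : x^(n-1) = x^(n-2) * x := by rw [← pow_succ]; congr 1; omega
  have h2 : x^n = x^(n-2) * x^2 := by rw [← pow_add]; congr 1; omega
  unfold G2
  push_cast
  rw [h1, h2]
  ring

lemma G2_flip {n : ℕ} (hn : 3 ≤ n) {α β x y : ℝ} (hβ : 0 ≤ β) (hx : 0 < x) (hxy : x < y)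
    (h : 0 ≤ G2 n α β x) : 0 < G2 n α β y := by
  have hy : 0 < y := hx.trans hxy
  have h2x : x^n = x^(n-2) * x^2 := by rw [← pow_add]; congr 1; omega
  have h2y : y^n = y^(n-2) * y^2 := by rw [← pow_add]; congr 1; omega
  have hpx : 0 < x^(n-2) := pow_pos hx _
  have hpy : 0 < y^(n-2) := pow_pos hy _
  have hple : x^(n-2) ≤ y^(n-2) := pow_le_pow_left₀ hx.le hxy.le _
  have hsq : x^2 < y^2 := by nlinarith
  unfold G2 at *
  rw [h2y]
  rw [h2x] at h
  have key := mul_le_mul_of_nonneg_right h hpy.le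
  have hn0 : (0:ℝ) < n := by positivity
  nlinarith [mul_pos hpx hpy, mul_le_mul_of_nonneg_left hple (by linarith : (0:ℝ) ≤ 2*β),
    mul_pos (mul_pos hpx hpy) (by linarith : (0:ℝ) < y^2 - x^2)]

lemma G2_small {n : ℕ} (hn : 3 ≤ n) {α β : ℝ} (hβ : 0 < β) :
    ∃ x : ℝ, 0 < x ∧ G2 n α β x < 0 := by
  set d : ℝ := n*|α| + n + 3 with hd
  have hd0 : 0 < d := by positivity
  set x : ℝ := min 1 (β / d) with hx
  have hx0 : 0 < x := lt_min one_pos (by positivity)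
  have hx1 : x ≤ 1 := min_le_left _ _
  have hxd : d * x ≤ β := by
    have : x ≤ β / d := min_le_right _ _
    calc d * x ≤ d * (β / d) := by nlinarith
    _ = β := by field_simp
  refine ⟨x, hx0, ?_⟩
  have h1 : x^n ≤ x := by
    calc x^n ≤ x^1 := pow_le_pow_of_le_one hx0.le hx1 (by omega)
    _ = x := pow_one x
  have h2 : x^(n-2) ≤ x := by
    calc x^(n-2) ≤ x^1 := pow_le_pow_of_le_one hx0.le hx1 (by omega)
    _ = x := pow_one x
  have hxn : 0 < x^n := pow_pos hx0 _
  have hxn2 : 0 < x^(n-2) := pow_pos hx0 _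
  have habs : -|α| ≤ α := neg_abs_le α
  have hn0 : (0:ℝ) ≤ n := by positivity
  unfold G2
  nlinarith [mul_le_mul_of_nonneg_left h2 (by positivity : (0:ℝ) ≤ n*|α|),
    mul_le_mul_of_nonneg_right habs (mul_nonneg hn0 hxn2.le),
    mul_le_mul_of_nonneg_left habs hn0]

lemma G2_big {n : ℕ} (hn : 3 ≤ n) (α β : ℝ) (p : ℝ) :
    ∃ M : ℝ, p < M ∧ 0 < G2 n α β M := by
  set M : ℝ := 1 + |α| + |β| + max p 0 with hM
  have ha := abs_nonneg α; have hb := abs_nonneg β; have h0 := le_max_right p (0:ℝ)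
  have hM1 : 1 ≤ M := by simp only [hM]; linarith
  have hMp : p < M := by have := le_max_left p (0:ℝ); linarith
  refine ⟨M, hMp, ?_⟩
  have h2 : M^n = M^(n-2) * M^2 := by rw [← pow_add]; congr 1; omega
  have h1 : (1:ℝ) ≤ M^(n-2) := one_le_pow₀ hM1
  have habs : α ≤ |α| := le_abs_self α
  have hbabs : β ≤ |β| := le_abs_self β
  have hn0 : (0:ℝ) ≤ n := by positivity
  have hn3 : (3:ℝ) ≤ n := by exact_mod_cast hn
  unfold G2
  rw [h2]
  have hMa : |α| ≤ M - 1 := by simp only [hM]; linarith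
  have hinner : 2*|β| + 2 ≤ (n+2)*M^2 - n*α := by
    nlinarith [mul_le_mul_of_nonneg_left hMa hn0, mul_self_nonneg (M-1),
      (by simp only [hM]; linarith : 1 + |β| ≤ M)]
  nlinarith [mul_le_mul_of_nonneg_left hinner (by positivity : (0:ℝ) ≤ M^(n-2)),
    mul_nonneg (by linarith : (0:ℝ) ≤ M^(n-2) - 1) (by linarith : (0:ℝ) ≤ 2*|β|+2)]

lemma F_big {n : ℕ} (hn : 3 ≤ n) (α β γ : ℝ) (p : ℝ) :
    ∃ M : ℝ, p < M ∧ γ < F n α β M := by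
  set M : ℝ := 1 + |α| + |β| + |γ| + max p 0 with hM
  have ha := abs_nonneg α; have hb := abs_nonneg β; have hg := abs_nonneg γ
  have h0 := le_max_right p (0:ℝ)
  have hM1 : 1 ≤ M := by simp only [hM]; linarith
  have hMp : p < M := by have := le_max_left p (0:ℝ); linarith
  refine ⟨M, hMp, ?_⟩
  have hMn : M ≤ M^n := le_self_pow₀ hM1 (by omega)
  have habs : α ≤ |α| := le_abs_self α
  have hbabs : β ≤ |β| := le_abs_self β
  have hgabs : γ ≤ |γ| := le_abs_self γ
  have hA : 1 + |β| + |γ| ≤ M^2 - α := by nlinarith [mul_self_nonneg (M-1)]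
  have hB : 1 ≤ M^n - β := by nlinarith
  unfold F
  nlinarith [mul_le_mul hA hB one_pos.le (by linarith : (0:ℝ) ≤ M^2 - α)]

/-- For `β > 0`, there is a critical point `c > 0` with `F` strictly decreasing on `[0,c]`
and strictly increasing on `[c,∞)`. -/
lemma exists_crit {n : ℕ} (hn : 3 ≤ n) {α β : ℝ} (hβ : 0 < β) :
    ∃ c : ℝ, 0 < c ∧ StrictAntiOn (F n α β) (Set.Icc 0 c) ∧
      StrictMonoOn (F n α β) (Set.Ici c) := by
  obtain ⟨x₀, hx₀, hG₀⟩ := G2_small hn hβ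
  obtain ⟨M, hM, hGM⟩ := G2_big hn α β x₀
  have hsub : Set.Icc (G2 n α β x₀) (G2 n α β M) ⊆ G2 n α β '' Set.Icc x₀ M :=
    intermediate_value_Icc hM.le (G2_cont n α β).continuousOn
  obtain ⟨c, hcmem, hc0⟩ := hsub ⟨hG₀.le, hGM.le⟩
  have hc : 0 < c := lt_of_lt_of_le hx₀ hcmem.1
  have hcx₀ : x₀ < c := by
    rcases eq_or_lt_of_le hcmem.1 with h | h
    · exfalso; rw [← h] at hc0; linarith
    · exact h
  have hneg : ∀ x, 0 < x → x < c → G2 n α β x < 0 := by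
    intro x hx hxc
    by_contra h
    push_neg at h
    have := G2_flip hn hβ.le hx hxc h
    linarith
  have hpos : ∀ x, c < x → 0 < G2 n α β x := by
    intro x hx
    exact G2_flip hn hβ.le hc hx (le_of_eq hc0.symm)
  refine ⟨c, hc, ?_, ?_⟩
  · apply strictAntiOn_of_deriv_neg (convex_Icc 0 c) (F_cont n α β).continuousOn
    intro x hx
    rw [interior_Icc] at hx
    rw [(F_hasDeriv hn α β x).deriv]
    exact mul_neg_of_pos_of_neg hx.1 (hneg x hx.1 hx.2)
  · apply strictMonoOn_of_deriv_pos (convex_Ici c) (F_cont n α β).continuousOn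
    intro x hx
    rw [interior_Ici] at hx
    rw [(F_hasDeriv hn α β x).deriv]
    exact mul_pos (hc.trans hx) (hpos x hx)

/-- Unique solution on an increasing branch `[p,∞)` with `F p < γ`. -/
lemma branch {n : ℕ} (hn : 3 ≤ n) {α β γ p : ℝ}
    (hmono : StrictMonoOn (F n α β) (Set.Ici p)) (hFp : F n α β p < γ) :
    ∃ x, p < x ∧ F n α β x = γ ∧ ∀ y, p ≤ y → F n α β y = γ → y = x := by
  obtain ⟨M, hM, hMγ⟩ := F_big hn α β γ p
  have hsub : Set.Icc (F n α β p) (F n α β M) ⊆ F n α β '' Set.Icc p M :=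
    intermediate_value_Icc hM.le (F_cont n α β).continuousOn
  obtain ⟨x, hxmem, hx⟩ := hsub ⟨hFp.le, hMγ.le⟩
  have hpx : p < x := by
    rcases eq_or_lt_of_le hxmem.1 with h | h
    · exfalso; rw [← h] at hx; linarith
    · exact h
  refine ⟨x, hpx, hx, ?_⟩
  intro y hy hyγ
  exact hmono.injOn hy hxmem.1 (by rw [hyγ, hx])

/-- Case `β > 0`, `αβ ≤ γ`: exactly one positive solution of `F = γ`. -/
lemma one_sol_beta_pos {n : ℕ} (hn : 3 ≤ n) {α β γ : ℝ} (hβ : 0 < β) (hαβ : α * β ≤ γ) :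
    ∃! x : ℝ, 0 < x ∧ F n α β x = γ := by
  obtain ⟨c, hc, hanti, hmono⟩ := exists_crit hn hβ
  have haux : ∀ y, 0 < y → y ≤ c → F n α β y < γ := by
    intro y hy hyc
    have := hanti (Set.mem_Icc.2 ⟨le_refl 0, hc.le⟩) (Set.mem_Icc.2 ⟨hy.le, hyc⟩) hy
    rw [F_zero hn α β] at this
    linarith
  have hFc : F n α β c < γ := haux c hc (le_refl c)
  obtain ⟨x, hcx, hx, huniq⟩ := branch hn hmono hFc
  refine ⟨x, ⟨hc.trans hcx, hx⟩, ?_⟩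
  rintro y ⟨hy0, hyF⟩
  rcases le_or_gt y c with h | h
  · exact absurd hyF (ne_of_lt (haux y hy0 h))
  · exact huniq y h.le hyF

/-- Case `β ≤ 0`, `γ > 0`, `αβ < γ`: exactly one positive solution. -/
lemma one_sol_beta_nonpos {n : ℕ} (hn : 3 ≤ n) {α β γ : ℝ} (hβ : β ≤ 0) (hγ : 0 < γ)
    (hαβ : α * β < γ) : ∃! x : ℝ, 0 < x ∧ F n α β x = γ := by
  have hn3 : (3:ℝ) ≤ n := by exact_mod_cast hn
  rcases le_or_gt α 0 with hα | hα
  · -- strictly increasing on [0, ∞)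
    have hmono : StrictMonoOn (F n α β) (Set.Ici 0) := by
      apply strictMonoOn_of_deriv_pos (convex_Ici 0) (F_cont n α β).continuousOn
      intro x hx
      rw [interior_Ici] at hx
      rw [(F_hasDeriv hn α β x).deriv]
      have hxn : 0 < x^n := pow_pos hx _
      have hxn2 : 0 < x^(n-2) := pow_pos hx _
      have : 0 < G2 n α β x := by
        unfold G2
        nlinarith [mul_nonneg (mul_nonneg (by positivity : (0:ℝ) ≤ (n:ℝ)) (by linarith : 0 ≤ -α)) hxn2.le]
      exact mul_pos hx this
    have hF0 : F n α β 0 < γ := by rw [F_zero hn α β]; exact hαβ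
    obtain ⟨x, hpx, hx, huniq⟩ := branch hn hmono hF0
    exact ⟨x, ⟨hpx, hx⟩, fun y ⟨hy0, hyF⟩ => huniq y hy0.le hyF⟩
  · -- α > 0 : F ≤ 0 on (0, √α], strictly increasing on [√α, ∞)
    set p : ℝ := Real.sqrt α with hp
    have hp0 : 0 ≤ p := Real.sqrt_nonneg α
    have hpsq : p^2 = α := Real.sq_sqrt hα.le
    have hmono : StrictMonoOn (F n α β) (Set.Ici p) := by
      apply strictMonoOn_of_deriv_pos (convex_Ici p) (F_cont n α β).continuousOn
      intro x hx
      rw [interior_Ici] at hx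
      have hx0 : 0 < x := lt_of_le_of_lt hp0 hx
      have hα2 : α < x^2 := by
        rw [← hpsq]; exact pow_lt_pow_left₀ hx hp0 (by norm_num)
      rw [(F_hasDeriv hn α β x).deriv]
      have h2 : x^n = x^(n-2) * x^2 := by rw [← pow_add]; congr 1; omega
      have hxn2 : 0 < x^(n-2) := pow_pos hx0 _
      have : 0 < G2 n α β x := by
        unfold G2
        rw [h2]
        nlinarith [mul_pos hxn2 (by linarith : (0:ℝ) < x^2 - α),
          mul_le_mul_of_nonneg_left hα2.le (by positivity : (0:ℝ) ≤ (n:ℝ) * x^(n-2))]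
      exact mul_pos hx0 this
    have hFp : F n α β p < γ := by
      unfold F
      rw [hpsq]
      simp [hγ]
    obtain ⟨x, hpx, hx, huniq⟩ := branch hn hmono hFp
    refine ⟨x, ⟨lt_of_le_of_lt hp0 hpx, hx⟩, ?_⟩
    rintro y ⟨hy0, hyF⟩
    rcases le_or_gt y p with h | h
    · exfalso
      have hy2 : y^2 ≤ α := by rw [← hpsq]; exact pow_le_pow_left₀ hy0.le h 2
      have hyn : 0 < y^n := pow_pos hy0 _
      have : F n α β y ≤ 0 := by
        unfold F
        nlinarith [mul_nonneg (by linarith : (0:ℝ) ≤ α - y^2) (by linarith : (0:ℝ) ≤ y^n - β)]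
      linarith [hyF ▸ this]
    · exact huniq y h.le hyF

/-- Case `α, β > 0`, `0 < γ < αβ` : exactly two positive solutions. -/
lemma two_sol {n : ℕ} (hn : 3 ≤ n) {α β γ : ℝ} (hα : 0 < α) (hβ : 0 < β) (hγ : 0 < γ)
    (hγαβ : γ < α * β) : {x : ℝ | 0 < x ∧ F n α β x = γ}.encard = 2 := by
  obtain ⟨c, hc, hanti, hmono⟩ := exists_crit hn hβ
  set sa : ℝ := Real.sqrt α with hsa
  have hsa0 : 0 ≤ sa := Real.sqrt_nonneg α
  have hFsa : F n α β sa = 0 := by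
    unfold F; rw [Real.sq_sqrt hα.le]; ring
  have hFc : F n α β c ≤ 0 := by
    rcases le_total sa c with h | h
    · rcases eq_or_lt_of_le h with h' | h'
      · rw [← h', hFsa]
      · have := hanti (Set.mem_Icc.2 ⟨hsa0, h⟩) (Set.mem_Icc.2 ⟨hc.le, le_refl c⟩) h'
        rw [hFsa] at this; linarith
    · rcases eq_or_lt_of_le h with h' | h'
      · rw [h', hFsa]
      · have := hmono (Set.mem_Ici.2 (le_refl c)) (Set.mem_Ici.2 h) h'
        rw [hFsa] at this; linarith
  have hFcγ : F n α β c < γ := lt_of_le_of_lt hFc hγ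
  have hF0 : F n α β 0 = α * β := F_zero hn α β
  -- first solution in (0, c)
  have hsub : Set.Icc (F n α β c) (F n α β 0) ⊆ F n α β '' Set.Icc 0 c :=
    intermediate_value_Icc' hc.le (F_cont n α β).continuousOn
  obtain ⟨x₁, hx₁mem, hx₁⟩ := hsub ⟨hFcγ.le, by rw [hF0]; exact hγαβ.le⟩
  have hx₁0 : 0 < x₁ := by
    rcases eq_or_lt_of_le hx₁mem.1 with h | h
    · exfalso; rw [← h, hF0] at hx₁; linarith
    · exact h
  have hx₁c : x₁ < c := by
    rcases eq_or_lt_of_le hx₁mem.2 with h | h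
    · exfalso; rw [h] at hx₁; linarith
    · exact h
  -- second solution in (c, ∞)
  obtain ⟨x₂, hcx₂, hx₂, huniq⟩ := branch hn hmono hFcγ
  have hne : x₁ ≠ x₂ := by intro h; rw [h] at hx₁c; linarith
  have hset : {x : ℝ | 0 < x ∧ F n α β x = γ} = {x₁, x₂} := by
    ext y
    simp only [Set.mem_setOf_eq, Set.mem_insert_iff, Set.mem_singleton_iff]
    constructor
    · rintro ⟨hy0, hyF⟩
      rcases le_or_gt y c with h | h
      · left
        exact hanti.injOn (Set.mem_Icc.2 ⟨hy0.le, h⟩) hx₁mem (by rw [hyF, hx₁])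
      · right
        exact huniq y h.le hyF
    · rintro (rfl | rfl)
      · exact ⟨hx₁0, hx₁⟩
      · exact ⟨hc.trans hcx₂, hx₂⟩
  rw [hset]
  exact Set.encard_pair hne

end GnAux

/-- **Positive zeros of `G_n` for `n ≥ 3` (Lemma solg).**
(a) If `αβ ≥ γ > 0` and `α ≤ 0` or `β ≤ 0`, no zero `x > 0`.
(b) If `γ > 0` and either `αβ < γ`, or `αβ = γ` with `α, β > 0`, exactly one.
(c) If `αβ > γ > 0` with `α, β > 0`, exactly two.
(d) If `αβ < γ < 0` and `β > 0`, exactly one. -/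
theorem Gn_positive_zeros
    (n : ℕ) (hn : 3 ≤ n) (α β γ : ℝ) :
    (α * β ≥ γ ∧ γ > 0 ∧ (α ≤ 0 ∨ β ≤ 0) →
      ¬ ∃ x : ℝ, 0 < x ∧ GG n α β γ x = 0)
    ∧ (γ > 0 ∧ (α * β < γ ∨ (α * β = γ ∧ 0 < α ∧ 0 < β)) →
      ∃! x : ℝ, 0 < x ∧ GG n α β γ x = 0)
    ∧ (α * β > γ ∧ γ > 0 ∧ 0 < α ∧ 0 < β →
      {x : ℝ | 0 < x ∧ GG n α β γ x = 0}.encard = 2)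
    ∧ (α * β < γ ∧ γ < 0 ∧ 0 < β →
      ∃! x : ℝ, 0 < x ∧ GG n α β γ x = 0) := by
  have hGGF : ∀ x : ℝ, GG n α β γ x = 0 ↔ GnAux.F n α β x = γ := by
    intro x
    rw [GG, GnAux.F, sub_eq_zero]
  refine ⟨?_, ?_, ?_, ?_⟩
  · -- (a)
    rintro ⟨hge, hγ, hab⟩ ⟨x, hx, hGx⟩
    have hαβ' : α ≤ 0 ∧ β ≤ 0 := by
      rcases hab with h | h
      · refine ⟨h, ?_⟩
        by_contra hb
        push_neg at hb
        nlinarith [mul_nonpos_of_nonpos_of_nonneg h hb.le]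
      · refine ⟨?_, h⟩
        by_contra ha
        push_neg at ha
        nlinarith [mul_nonpos_of_nonneg_of_nonpos ha.le h]
    obtain ⟨hα, hβ⟩ := hαβ'
    rw [hGGF x] at hGx
    have hxn : 0 < x^n := pow_pos hx _
    have hx2 : 0 < x^2 := pow_pos hx 2
    have : GnAux.F n α β x > α * β := by
      unfold GnAux.F
      nlinarith [mul_pos hx2 hxn, mul_nonneg (by linarith : (0:ℝ) ≤ -α) hxn.le,
        mul_nonneg (by linarith : (0:ℝ) ≤ -β) hx2.le]
    linarith [hGx ▸ this]
  · -- (b)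
    rintro ⟨hγ, hb⟩
    have h1 : ∃! x : ℝ, 0 < x ∧ GnAux.F n α β x = γ := by
      rcases le_or_gt β 0 with hβ | hβ
      · rcases hb with h | ⟨_, _, hβ'⟩
        · exact GnAux.one_sol_beta_nonpos hn hβ hγ h
        · linarith
      · have hαβ : α * β ≤ γ := by rcases hb with h | ⟨h, _, _⟩ <;> linarith
        exact GnAux.one_sol_beta_pos hn hβ hαβ
    obtain ⟨x, ⟨hx0, hxF⟩, huniq⟩ := h1
    exact ⟨x, ⟨hx0, (hGGF x).2 hxF⟩, fun y ⟨hy0, hyG⟩ => huniq y ⟨hy0, (hGGF y).1 hyG⟩⟩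
  · -- (c)
    rintro ⟨hαβ, hγ, hα, hβ⟩
    have hset : {x : ℝ | 0 < x ∧ GG n α β γ x = 0} = {x : ℝ | 0 < x ∧ GnAux.F n α β x = γ} := by
      ext y; simp only [Set.mem_setOf_eq, hGGF y]
    rw [hset]
    exact GnAux.two_sol hn hα hβ hγ hαβ
  · -- (d)
    rintro ⟨hαβ, hγ, hβ⟩
    obtain ⟨x, ⟨hx0, hxF⟩, huniq⟩ := GnAux.one_sol_beta_pos hn hβ (le_of_lt hαβ)
    exact ⟨x, ⟨hx0, (hGGF x).2 hxF⟩, fun y ⟨hy0, hyG⟩ => huniq y ⟨hy0, (hGGF y).1 hyG⟩⟩
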